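/- Fix real parameters σ > 0, γ > 0, g > 0 and η ≠ 0; set ω = σγη and β = 2σ²/g, and define u(t) = cosh(ωt) + (ω/β)sinh(ωt), v(t) = cosh(ωt) + (β/ω)sinh(ωt), a(t) = g·v(t)/u(t), P(t) = p₀/u(t), Q(t) = (Q₀ − ηβ(u(t) − 1)/ω²)/v(t) for given p₀, Q₀ ∈ ℝ. Then the function φ(t) = (2σ²p₀/g)·(η(cosh(ωt) − 1)/ω² − Q₀·sinh(ωt)/ω)/v(t) satisfies φ(0) = 0 and, for every t ≥ 0, φ'(t) = −(2σ²/a(t))·Q(t)·P(t). -/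

import Mathlib

/-!
Write `φ = K · N / v` with `K = 2σ²p₀/g`. By the quotient rule and `cosh² - sinh² = 1`,
`N' v - N v' = -(Q₀ - ηβ(u - 1)/ω²) = -Q v`, so `φ' = -K Q / v`, and this equals
`-(2σ²/a) Q P = -(2σ² u/(g v)) Q p₀/u`. Dividing by `u` and `v` is legitimate for `t ≥ 0`, where
`ω sinh(ωt) ≥ 0` and `β > 0` give `u, v ≥ 1`.
-/

open Real

lemma one_le_cosh_add_mul_sinh {c ω t : ℝ} (hc : 0 ≤ c * ω) (ht : 0 ≤ t) :
    1 ≤ cosh (ω * t) + c * sinh (ω * t) := by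
  have hcs : 0 ≤ c * sinh (ω * t) := by
    rcases lt_trichotomy ω 0 with hω | rfl | hω
    · exact mul_nonneg_of_nonpos_of_nonpos (nonpos_of_mul_nonneg_left hc hω)
        (sinh_nonpos_iff.mpr (mul_nonpos_of_nonpos_of_nonneg hω.le ht))
    · simp
    · exact mul_nonneg (nonneg_of_mul_nonneg_left hc hω)
        (sinh_nonneg_iff.mpr (mul_nonneg hω.le ht))
  linarith [one_le_cosh (ω * t)]

lemma hasDerivAt_cosh_mul (ω t : ℝ) :
    HasDerivAt (fun x => cosh (ω * x)) (ω * sinh (ω * t)) t := by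
  simpa [mul_comm] using ((hasDerivAt_id t).const_mul ω).cosh

lemma hasDerivAt_sinh_mul (ω t : ℝ) :
    HasDerivAt (fun x => sinh (ω * x)) (ω * cosh (ω * t)) t := by
  simpa [mul_comm] using ((hasDerivAt_id t).const_mul ω).sinh

lemma hasDerivAt_phase_quotient {ω β η Q₀ t : ℝ} (hω : ω ≠ 0) (hβ : β ≠ 0)
    (hv : cosh (ω * t) + β / ω * sinh (ω * t) ≠ 0) :
    HasDerivAt
      (fun x => (η * (cosh (ω * x) - 1) / ω ^ 2 - Q₀ * sinh (ω * x) / ω) /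
        (cosh (ω * x) + β / ω * sinh (ω * x)))
      (-(Q₀ - η * β * (cosh (ω * t) + ω / β * sinh (ω * t) - 1) / ω ^ 2) /
        (cosh (ω * t) + β / ω * sinh (ω * t)) ^ 2) t := by
  have hc := hasDerivAt_cosh_mul ω t
  have hs := hasDerivAt_sinh_mul ω t
  have hN := (((hc.sub_const 1).const_mul η).div_const (ω ^ 2)).sub ((hs.const_mul Q₀).div_const ω)
  refine (hN.div (hc.add (hs.const_mul (β / ω))) hv).congr_deriv ?_
  simp only [Pi.add_apply, Pi.sub_apply]
  congr 1
  field_simp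
  linear_combination (-(η * β) - Q₀ * ω ^ 2) * cosh_sq_sub_sinh_sq (ω * t)

/-- The explicit phase
`φ(t) = (2σ²p₀/g)(η(cosh(ωt)−1)/ω² − Q₀ sinh(ωt)/ω)/v(t)`
satisfies `φ(0) = 0` and `φ'(t) = −(2σ²/a(t))·Q(t)·P(t)` for `t ≥ 0`. -/
theorem stmt3 (σ γ g η : ℝ) (hσ : 0 < σ) (hγ : 0 < γ) (hg : 0 < g) (hη : η ≠ 0)
    (p₀ Q₀ : ℝ) (ω β : ℝ) (hω : ω = σ * γ * η) (hβ : β = 2 * σ ^ 2 / g)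
    (u v a P Q φ : ℝ → ℝ)
    (hu : ∀ t, u t = Real.cosh (ω * t) + (ω / β) * Real.sinh (ω * t))
    (hv : ∀ t, v t = Real.cosh (ω * t) + (β / ω) * Real.sinh (ω * t))
    (ha : ∀ t, a t = g * v t / u t)
    (hP : ∀ t, P t = p₀ / u t)
    (hQ : ∀ t, Q t = (Q₀ - η * β * (u t - 1) / ω ^ 2) / v t)
    (hφ : ∀ t, φ t =
      (2 * σ ^ 2 * p₀ / g) *
        ((η * (Real.cosh (ω * t) - 1) / ω ^ 2 - Q₀ * Real.sinh (ω * t) / ω) / v t)) :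
    φ 0 = 0 ∧
    ∀ t ≥ 0, HasDerivAt φ (-(2 * σ ^ 2 / a t) * Q t * P t) t := by
  have hω0 : ω ≠ 0 := hω ▸ mul_ne_zero (mul_ne_zero hσ.ne' hγ.ne') hη
  have hβ0 : 0 < β := hβ ▸ by positivity
  refine ⟨by simp [hφ], fun t ht => ?_⟩
  have hu1 : 1 ≤ u t := by
    rw [hu]
    exact one_le_cosh_add_mul_sinh (by rw [div_mul_eq_mul_div, ← sq]; positivity) ht
  have hv1 : 1 ≤ v t := by
    rw [hv]
    exact one_le_cosh_add_mul_sinh (by rw [div_mul_cancel₀ β hω0]; exact hβ0.le) ht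
  have hφ' := (hasDerivAt_phase_quotient (η := η) (Q₀ := Q₀) hω0 hβ0.ne'
    (by rw [← hv]; positivity)).const_mul (2 * σ ^ 2 * p₀ / g)
  rw [← hu, ← hv] at hφ'
  have hφ_eq : φ = fun x => (2 * σ ^ 2 * p₀ / g) *
      ((η * (cosh (ω * x) - 1) / ω ^ 2 - Q₀ * sinh (ω * x) / ω) /
        (cosh (ω * x) + β / ω * sinh (ω * x))) := funext fun x => by rw [hφ, hv]
  refine hφ_eq ▸ hφ'.congr_deriv ?_
  rw [ha, hP, hQ]
  field_simp
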